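/- Side-information switching inequality: let U, W, Ẇ, Z, S be finitely-valued random variables such that Ẇ → W → (U, S) → Z is a Markov chain (Ẇ is a degraded version of W, and Z depends on (W, Ẇ) only through (U,S)), and S takes values in a set of size q_e. Then I(U; Z | W) ≤ I(U; Z | Ẇ) + log₂ q_e. -/

import Mathlib

open Finset

section IT
variable {Ω : Type} [Fintype Ω]

/-- Probability that random variable `X` takes the value `x` under pmf `p`. -/
def pm {α : Type} [Fintype α] [DecidableEq α] (p : Ω → ℝ) (X : Ω → α) (x : α) : ℝ :=
  ∑ ω, if X ω = x then p ω else 0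

/-- Shannon entropy (in bits) of random variable `X` under pmf `p`. -/
noncomputable def ent {α : Type} [Fintype α] [DecidableEq α] (p : Ω → ℝ) (X : Ω → α) : ℝ :=
  -∑ x, pm p X x * Real.logb 2 (pm p X x)

/-- Mutual information `I(X;Y)` (in bits). -/
noncomputable def mi {α β : Type} [Fintype α] [DecidableEq α] [Fintype β] [DecidableEq β]
    (p : Ω → ℝ) (X : Ω → α) (Y : Ω → β) : ℝ :=
  ent p X + ent p Y - ent p (fun ω => (X ω, Y ω))

/-- Conditional entropy `H(X | Y)` (in bits). -/
noncomputable def condEnt {α β : Type} [Fintype α] [DecidableEq α] [Fintype β] [DecidableEq β]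
    (p : Ω → ℝ) (X : Ω → α) (Y : Ω → β) : ℝ :=
  ent p (fun ω => (X ω, Y ω)) - ent p Y

/-- Conditional mutual information `I(X;Y | Z)` (in bits). -/
noncomputable def cmi {α β γ : Type} [Fintype α] [DecidableEq α] [Fintype β] [DecidableEq β]
    [Fintype γ] [DecidableEq γ] (p : Ω → ℝ) (X : Ω → α) (Y : Ω → β) (Z : Ω → γ) : ℝ :=
  ent p (fun ω => (X ω, Z ω)) + ent p (fun ω => (Y ω, Z ω))
    - ent p (fun ω => (X ω, Y ω, Z ω)) - ent p Z

/-- `p` is a probability mass function on the finite sample space `Ω`. -/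
def IsPMF (p : Ω → ℝ) : Prop := (∀ ω, 0 ≤ p ω) ∧ ∑ ω, p ω = 1

/-- `X` and `Z` are conditionally independent given `Y` (i.e. `X → Y → Z` is a Markov chain). -/
def CondIndep {α β γ : Type} [Fintype α] [DecidableEq α] [Fintype β] [DecidableEq β]
    [Fintype γ] [DecidableEq γ] (p : Ω → ℝ) (X : Ω → α) (Z : Ω → γ) (Y : Ω → β) : Prop :=
  ∀ x z y, pm p (fun ω => (X ω, Z ω, Y ω)) (x, z, y) * pm p Y y =
    pm p (fun ω => (X ω, Y ω)) (x, y) * pm p (fun ω => (Z ω, Y ω)) (z, y)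

end IT

/-!
Write both sides through conditional entropies, `I(U;Z|V) = H(Z|V) - H(Z|U,V)`.
The chain `Ẇ → W → Z` gives `H(Z|W) = H(Z|Ẇ,W) ≤ H(Z|Ẇ)`. For the other term, condition
additionally on `S` and use the chains `W → (U,S) → Z` and `Ẇ → (U,S) → Z`:
`H(Z|U,W) ≥ H(Z|U,S,W) = H(Z|U,S) = H(Z|U,S,Ẇ) ≥ H(Z|U,Ẇ) - H(S)`, and `H(S) ≤ log₂ q_e`.
Nonnegativity of conditional mutual information is Gibbs' inequality against the distribution
`p(x,z) p(y,z) / p(z)`.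
-/

open Real

section InformationInequalities

variable {Ω α β γ δ ε : Type} [Fintype Ω] [Fintype α] [DecidableEq α] [Fintype β] [DecidableEq β]
  [Fintype γ] [DecidableEq γ] [Fintype δ] [DecidableEq δ] [Fintype ε] [DecidableEq ε]
  {p : Ω → ℝ}

lemma sum_pm_mul (X : Ω → α) (g : α → ℝ) : ∑ x, pm p X x * g x = ∑ ω, p ω * g (X ω) := by
  simp only [pm, sum_mul, ite_mul, zero_mul]
  rw [sum_comm]
  simp

lemma sum_pm (X : Ω → α) : ∑ x, pm p X x = ∑ ω, p ω := by
  simpa using sum_pm_mul (p := p) X fun _ => 1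

lemma pm_map (X : Ω → α) (f : α → β) (b : β) :
    pm p (fun ω => f (X ω)) b = ∑ x, if f x = b then pm p X x else 0 := by
  simpa [pm, mul_ite] using (sum_pm_mul (p := p) X fun x => if f x = b then 1 else 0).symm

lemma pm_map_pair (X : Ω → α) (Y : Ω → β) (f : α → γ) (c : γ) (y : β) :
    pm p (fun ω => (f (X ω), Y ω)) (c, y)
      = ∑ x, if f x = c then pm p (fun ω => (X ω, Y ω)) (x, y) else 0 := by
  rw [pm_map (fun ω => (X ω, Y ω)) fun t => (f t.1, t.2)]
  simp [Fintype.sum_prod_type, ite_and]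

lemma sum_pm_pair_left (X : Ω → α) (Y : Ω → β) (y : β) :
    ∑ x, pm p (fun ω => (X ω, Y ω)) (x, y) = pm p Y y := by
  simp only [pm]
  rw [sum_comm]
  simp [Prod.ext_iff, ite_and]

lemma pm_nonneg (hp : ∀ ω, 0 ≤ p ω) (X : Ω → α) (x : α) : 0 ≤ pm p X x :=
  sum_nonneg fun ω _ => by split_ifs <;> simp [hp ω]

lemma pm_le_pm (hp : ∀ ω, 0 ≤ p ω) {X : Ω → α} {Y : Ω → β} {x : α} {y : β}
    (h : ∀ ω, X ω = x → Y ω = y) : pm p X x ≤ pm p Y y :=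
  sum_le_sum fun ω _ => by
    by_cases hx : X ω = x
    · simp [hx, h ω hx]
    · simp only [hx, if_false]; split_ifs <;> simp [hp ω]

lemma pm_le_pm_map (hp : ∀ ω, 0 ≤ p ω) (X : Ω → α) (f : α → β) (x : α) :
    pm p X x ≤ pm p (fun ω => f (X ω)) (f x) :=
  pm_le_pm hp fun ω hω => by rw [hω]

lemma pm_apply_pos (hp : ∀ ω, 0 ≤ p ω) (X : Ω → α) {ω : Ω} (hω : 0 < p ω) :
    0 < pm p X (X ω) :=
  hω.trans_le <| by
    simpa [pm] using single_le_sum (f := fun ω' => if X ω' = X ω then p ω' else 0)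
      (fun ω' _ => by split_ifs <;> simp [hp ω']) (mem_univ ω)

lemma ent_eq_neg_sum (X : Ω → α) : ent p X = -∑ ω, p ω * logb 2 (pm p X (X ω)) := by
  rw [ent, sum_pm_mul X fun x => logb 2 (pm p X x)]

lemma ent_congr {X : Ω → α} {Y : Ω → β} (h : ∀ ω ω', X ω = X ω' ↔ Y ω = Y ω') :
    ent p X = ent p Y := by
  simp only [ent_eq_neg_sum, pm, h]

lemma ent_le_ent_of_determines (hp : ∀ ω, 0 ≤ p ω) {X : Ω → α} {Y : Ω → β}
    (h : ∀ ω ω', X ω = X ω' → Y ω = Y ω') : ent p Y ≤ ent p X := by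
  rw [ent_eq_neg_sum, ent_eq_neg_sum, neg_le_neg_iff]
  refine sum_le_sum fun ω _ => ?_
  rcases (hp ω).eq_or_lt with hω | hω
  · simp [← hω]
  · exact mul_le_mul_of_nonneg_left (logb_le_logb_of_le one_lt_two (pm_apply_pos hp X hω)
      (pm_le_pm hp fun ω' hω' => h ω' ω hω')) hω.le

lemma sum_mul_logb_div_nonpos {ι : Type} [Fintype ι] {a b : ι → ℝ} (ha : ∀ i, 0 ≤ a i)
    (hb : ∀ i, 0 ≤ b i) (hab : ∀ i, a i ≠ 0 → b i ≠ 0) (hsum : ∑ i, b i ≤ ∑ i, a i) :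
    ∑ i, a i * logb 2 (b i / a i) ≤ 0 := by
  have hterm : ∀ i, a i * log (b i / a i) ≤ b i - a i := by
    intro i
    rcases (ha i).eq_or_lt with hai | hai
    · simp [← hai, hb i]
    · have hbi : 0 < b i := (hb i).lt_of_ne (hab i hai.ne').symm
      calc a i * log (b i / a i) ≤ a i * (b i / a i - 1) :=
            mul_le_mul_of_nonneg_left (log_le_sub_one_of_pos (div_pos hbi hai)) hai.le
        _ = b i - a i := by field_simp
  have hlog : ∑ i, a i * log (b i / a i) ≤ 0 :=
    calc ∑ i, a i * log (b i / a i) ≤ ∑ i, (b i - a i) := sum_le_sum fun i _ => hterm i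
      _ ≤ 0 := by rw [sum_sub_distrib]; linarith
  simp only [logb, ← mul_div_assoc, ← sum_div]
  exact div_nonpos_of_nonpos_of_nonneg hlog (log_nonneg one_le_two)

lemma ent_le_logb_card (hp : IsPMF p) (X : Ω → α) : ent p X ≤ logb 2 (Fintype.card α) := by
  rcases (Fintype.card α).eq_zero_or_pos with hα | hα
  · have : IsEmpty α := Fintype.card_eq_zero_iff.1 hα
    simp [ent]
  set c : ℝ := (Fintype.card α : ℝ)
  have hc : 0 < c := by positivity
  have hgibbs := sum_mul_logb_div_nonpos (a := pm p X) (b := fun _ => 1 / c)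
    (pm_nonneg hp.1 X) (fun _ => by positivity) (fun _ _ => by positivity)
    (by simp [sum_pm, hp.2, c, mul_inv_cancel₀ hc.ne'])
  have hterm : ∀ x, pm p X x * logb 2 (1 / c / pm p X x)
      = -(pm p X x * logb 2 c) - pm p X x * logb 2 (pm p X x) := by
    intro x
    by_cases hx : pm p X x = 0
    · simp [hx]
    · rw [logb_div (by positivity) hx, one_div, logb_inv]
      ring
  simp only [hterm, sum_sub_distrib, sum_neg_distrib, ← sum_mul, sum_pm, hp.2] at hgibbs
  rw [ent]
  linarith

lemma sum_pm_mul_pm_div_pm (X : Ω → α) (Y : Ω → β) (Z : Ω → γ) :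
    ∑ x, ∑ y, ∑ z,
      pm p (fun ω => (X ω, Z ω)) (x, z) * pm p (fun ω => (Y ω, Z ω)) (y, z) / pm p Z z
      = ∑ ω, p ω := by
  rw [sum_comm_cycle, ← sum_pm (p := p) Z]
  refine sum_congr rfl fun z _ => ?_
  simp only [← sum_div]
  rw [← sum_mul_sum, sum_pm_pair_left, sum_pm_pair_left]
  by_cases hz : pm p Z z = 0
  · simp [hz]
  · field_simp

lemma cmi_eq_neg_sum_mul_logb (hp : ∀ ω, 0 ≤ p ω) (X : Ω → α) (Y : Ω → β) (Z : Ω → γ) :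
    cmi p X Y Z = -∑ t : α × β × γ, pm p (fun ω => (X ω, Y ω, Z ω)) t * logb 2
      (pm p (fun ω => (X ω, Z ω)) (t.1, t.2.2) * pm p (fun ω => (Y ω, Z ω)) (t.2.1, t.2.2)
        / pm p Z t.2.2 / pm p (fun ω => (X ω, Y ω, Z ω)) t) := by
  rw [sum_pm_mul (fun ω => (X ω, Y ω, Z ω)), cmi, ent_eq_neg_sum, ent_eq_neg_sum, ent_eq_neg_sum,
    ent_eq_neg_sum, ← sub_eq_zero]
  simp only [← sum_neg_distrib, ← sum_sub_distrib, ← sum_add_distrib]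
  refine sum_eq_zero fun ω _ => ?_
  rcases (hp ω).eq_or_lt with hω | hω
  · simp [← hω]
  have hXZ := pm_apply_pos hp (fun ω => (X ω, Z ω)) hω
  have hYZ := pm_apply_pos hp (fun ω => (Y ω, Z ω)) hω
  have hZ := pm_apply_pos hp Z hω
  have hXYZ := pm_apply_pos hp (fun ω => (X ω, Y ω, Z ω)) hω
  rw [logb_div (by positivity) hXYZ.ne', logb_div (by positivity) hZ.ne',
    logb_mul hXZ.ne' hYZ.ne']
  ring

theorem cmi_nonneg (hp : ∀ ω, 0 ≤ p ω) (X : Ω → α) (Y : Ω → β) (Z : Ω → γ) :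
    0 ≤ cmi p X Y Z := by
  rw [cmi_eq_neg_sum_mul_logb hp, neg_nonneg]
  refine sum_mul_logb_div_nonpos (pm_nonneg hp _) (fun t => ?_) (fun t ht => ?_) ?_
  · exact div_nonneg (mul_nonneg (pm_nonneg hp _ _) (pm_nonneg hp _ _)) (pm_nonneg hp _ _)
  · have ht := (pm_nonneg hp _ t).lt_of_ne' ht
    have hmarg {κ : Type} [Fintype κ] [DecidableEq κ] (f : α × β × γ → κ) :=
      ht.trans_le (pm_le_pm_map hp (fun ω => (X ω, Y ω, Z ω)) f t)
    exact (div_pos (mul_pos (hmarg fun s => (s.1, s.2.2)) (hmarg fun s => (s.2.1, s.2.2)))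
      (hmarg fun s => s.2.2)).ne'
  · rw [sum_pm, ← sum_pm_mul_pm_div_pm X Y Z]
    simp only [Fintype.sum_prod_type, le_refl]

lemma cmi_eq_condEnt_sub (X : Ω → α) (Y : Ω → β) (Z : Ω → γ) :
    cmi p X Y Z = condEnt p Y Z - condEnt p Y (fun ω => (X ω, Z ω)) := by
  rw [cmi, condEnt, condEnt,
    ent_congr (X := fun ω => (X ω, Y ω, Z ω)) (Y := fun ω => (Y ω, X ω, Z ω))
    fun ω ω' => by simp only [Prod.ext_iff]; tauto]
  ring

lemma condEnt_congr_right (X : Ω → α) {Y : Ω → β} {Y' : Ω → γ}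
    (h : ∀ ω ω', Y ω = Y ω' ↔ Y' ω = Y' ω') : condEnt p X Y = condEnt p X Y' := by
  rw [condEnt, condEnt, ent_congr h, ent_congr (Y := fun ω => (X ω, Y' ω))
    fun ω ω' => by simp only [Prod.mk.injEq, h]]

lemma condEnt_le_condEnt_of_determines (hp : ∀ ω, 0 ≤ p ω) (X : Ω → α) {Y : Ω → β}
    {Y' : Ω → γ} (h : ∀ ω ω', Y ω = Y ω' → Y' ω = Y' ω') :
    condEnt p X Y ≤ condEnt p X Y' := by
  have hcmi := cmi_nonneg hp Y X Y'
  rwa [cmi_eq_condEnt_sub, sub_nonneg, condEnt_congr_right X (Y' := Y)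
    fun ω ω' => ⟨fun hY => (Prod.ext_iff.1 hY).1, fun hY => Prod.ext hY (h ω ω' hY)⟩] at hcmi

lemma ent_const (hp : ∑ ω, p ω = 1) (c : α) : ent p (fun _ => c) = 0 := by
  simp [ent, pm, hp]

lemma condEnt_le_ent (hp : IsPMF p) (X : Ω → α) (Y : Ω → β) : condEnt p X Y ≤ ent p X :=
  calc condEnt p X Y ≤ condEnt p X (fun _ => ()) :=
        condEnt_le_condEnt_of_determines hp.1 X fun _ _ _ => rfl
    _ = ent p X := by
        rw [condEnt, ent_const hp.2, sub_zero]
        exact ent_congr fun ω ω' => by simp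

lemma condEnt_le_condEnt_pair_add_ent (hp : IsPMF p) (X : Ω → α) (Y : Ω → β) (S : Ω → γ) :
    condEnt p X Y ≤ condEnt p X (fun ω => (S ω, Y ω)) + ent p S := by
  have hXY : ent p (fun ω => (X ω, Y ω)) ≤ ent p (fun ω => (X ω, S ω, Y ω)) :=
    ent_le_ent_of_determines hp.1 fun ω ω' h => by simp_all [Prod.ext_iff]
  have hSY := condEnt_le_ent hp S Y
  rw [condEnt] at hSY ⊢
  rw [condEnt]
  linarith

namespace CondIndep

variable {X : Ω → α} {Z : Ω → γ} {Y : Ω → β}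

lemma ent_add (hp : ∀ ω, 0 ≤ p ω) (h : CondIndep p X Z Y) :
    ent p (fun ω => (X ω, Z ω, Y ω)) + ent p Y
      = ent p (fun ω => (X ω, Y ω)) + ent p (fun ω => (Z ω, Y ω)) := by
  simp only [ent_eq_neg_sum, ← neg_add, ← sum_add_distrib, ← mul_add]
  refine congrArg _ (sum_congr rfl fun ω _ => ?_)
  rcases (hp ω).eq_or_lt with hω | hω
  · simp [← hω]
  rw [← logb_mul (pm_apply_pos hp _ hω).ne' (pm_apply_pos hp _ hω).ne',
    ← logb_mul (pm_apply_pos hp _ hω).ne' (pm_apply_pos hp _ hω).ne', h]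

lemma condEnt_eq (hp : ∀ ω, 0 ≤ p ω) (h : CondIndep p X Z Y) :
    condEnt p Z (fun ω => (X ω, Y ω)) = condEnt p Z Y := by
  rw [condEnt, condEnt, ent_congr (Y := fun ω => (X ω, Z ω, Y ω))
    fun ω ω' => by simp only [Prod.ext_iff]; tauto]
  linarith [h.ent_add hp]

lemma comp (h : CondIndep p X Z Y) (f : α → δ) (g : γ → ε) :
    CondIndep p (fun ω => f (X ω)) (fun ω => g (Z ω)) Y := by
  intro a c y
  have hXZY : pm p (fun ω => (f (X ω), g (Z ω), Y ω)) (a, c, y) = ∑ x, ∑ z,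
      if f x = a ∧ g z = c then pm p (fun ω => (X ω, Z ω, Y ω)) (x, z, y) else 0 := by
    rw [pm_map (fun ω => (X ω, Z ω, Y ω)) fun t => (f t.1, g t.2.1, t.2.2)]
    simp [Fintype.sum_prod_type, ite_and]
  rw [hXZY, pm_map_pair, pm_map_pair, sum_mul_sum, sum_mul]
  refine sum_congr rfl fun x _ => ?_
  rw [sum_mul]
  refine sum_congr rfl fun z _ => ?_
  by_cases hx : f x = a <;> by_cases hz : g z = c <;> simp [hx, hz, h x z y]

end CondIndep

end InformationInequalities

/-- side-information switching. If `Ẇ → W → (U,S) → Z` is a Markov chain and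
`S` takes values in a set of size `q_e`, then `I(U;Z|W) ≤ I(U;Z|Ẇ) + log₂ q_e`. -/
theorem stmt9 {Ω υ ωt ωd ζ σ : Type} [Fintype Ω] [Fintype υ] [DecidableEq υ]
    [Fintype ωt] [DecidableEq ωt] [Fintype ωd] [DecidableEq ωd]
    [Fintype ζ] [DecidableEq ζ] [Fintype σ] [DecidableEq σ]
    (p : Ω → ℝ) (hp : IsPMF p) (qe : ℕ) (hq : Fintype.card σ = qe)
    (U : Ω → υ) (W : Ω → ωt) (Wdot : Ω → ωd) (Z : Ω → ζ) (S : Ω → σ)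
    (hMarkov1 : CondIndep p Wdot (fun ω => (U ω, S ω, Z ω)) W)
    (hMarkov2 : CondIndep p (fun ω => (Wdot ω, W ω)) Z (fun ω => (U ω, S ω))) :
    cmi p U Z W ≤ cmi p U Z Wdot + Real.logb 2 qe := by
  have hZW : condEnt p Z W ≤ condEnt p Z Wdot :=
    calc condEnt p Z W = condEnt p Z (fun ω => (Wdot ω, W ω)) :=
          ((hMarkov1.comp (fun w => w) fun t => t.2.2).condEnt_eq hp.1).symm
      _ ≤ condEnt p Z Wdot :=
          condEnt_le_condEnt_of_determines hp.1 Z fun _ _ h => (Prod.ext_iff.1 h).1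
  have hZUW : condEnt p Z (fun ω => (U ω, Wdot ω))
      ≤ condEnt p Z (fun ω => (U ω, W ω)) + logb 2 qe :=
    calc condEnt p Z (fun ω => (U ω, Wdot ω))
        ≤ condEnt p Z (fun ω => (S ω, U ω, Wdot ω)) + ent p S :=
          condEnt_le_condEnt_pair_add_ent hp Z _ S
      _ = condEnt p Z (fun ω => (Wdot ω, U ω, S ω)) + ent p S := by
          rw [condEnt_congr_right Z (Y' := fun ω => (Wdot ω, U ω, S ω))
            fun ω ω' => by simp only [Prod.ext_iff]; tauto]
      _ = condEnt p Z (fun ω => (U ω, S ω)) + ent p S := by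
          rw [(hMarkov2.comp Prod.fst fun z => z).condEnt_eq hp.1]
      _ = condEnt p Z (fun ω => (W ω, U ω, S ω)) + ent p S := by
          rw [(hMarkov2.comp Prod.snd fun z => z).condEnt_eq hp.1]
      _ ≤ condEnt p Z (fun ω => (U ω, W ω)) + logb 2 qe :=
          add_le_add (condEnt_le_condEnt_of_determines hp.1 Z fun _ _ h => by simp_all)
            (hq ▸ ent_le_logb_card hp S)
  rw [cmi_eq_condEnt_sub, cmi_eq_condEnt_sub]
  linarith
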